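/- Let W ⊂ ℝ^{2n} be an open set with a 1-form β such that dβ is symplectic, let Y be the Liouville vector field (ι_Y dβ = β), and let f, φ : W → ℝ be smooth with f − df(Y) > 0 and φ > 0. Define X_f, X_φ by ι_{X_f} dβ = df, ι_{X_φ} dβ = dφ. Then the Reeb vector field of the contact form λ = φ(f ds + β) on S¹ × W is R = (1/φ²)·( ((φ + dφ(Y))/(f − df(Y)))(∂_s + X_f) + (df(X_φ)/(f − df(Y))) Y + X_φ ), i.e. this vector field satisfies λ(R) = 1 and ι_R dλ = 0. -/

import Mathlib

/-!
Only the antisymmetry of `ω` enters: it gives `β(Y) = 0`, `β(X_f) = -df(Y)`, `β(X_φ) = -dφ(Y)`,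
`df(X_f) = dφ(X_φ) = 0` and `dφ(X_f) = -df(X_φ)`. Hence for `V = a X_f + b Y + X_φ` with
`a = (φ + dφ(Y))/(f - df(Y))` and `b = df(X_φ)/(f - df(Y))` one finds `β(V) = φ - f a`,
`df(V) = f b`, `dφ(V) = -φ b` and `ι_V ω = a df + b β + dφ`; the coefficients are chosen exactly
so that `f a + β(V) = φ` and `φ df(V) + f dφ(V) = 0`. After that, `λ(R) = 1` and `ι_R dλ = 0`
are ring identities.
-/

namespace LinearMap.IsAlt

variable {K F : Type*} [CommRing K] [AddCommGroup F] [Module K F]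
  {ω : F →ₗ[K] F →ₗ[K] K}

theorem apply_self_of_contract_eq (hω : ω.IsAlt) {X : F} {α : F →ₗ[K] K}
    (hX : ∀ w, ω X w = α w) : α X = 0 := by
  rw [← hX]
  exact hω.self_eq_zero X

theorem apply_of_contract_eq (hω : ω.IsAlt) {X Z : F} {α γ : F →ₗ[K] K}
    (hX : ∀ w, ω X w = α w) (hZ : ∀ w, ω Z w = γ w) : α Z = -γ X := by
  rw [← hX, ← hZ, hω.neg]

end LinearMap.IsAlt

section ReebCombination

variable {K F : Type*} [CommRing K] [AddCommGroup F] [Module K F]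
  {ω : F →ₗ[K] F →ₗ[K] K} {β df dφ : F →ₗ[K] K} {Y Xf Xφ : F} {f φ a b : K}

theorem beta_apply_combination (hω : ω.IsAlt) (hY : ∀ w, ω Y w = β w)
    (hXf : ∀ w, ω Xf w = df w) (hXφ : ∀ w, ω Xφ w = dφ w)
    (ha : a * (f - df Y) = φ + dφ Y) (b : K) :
    β (a • Xf + b • Y + Xφ) = φ - f * a := by
  simp only [map_add, map_smul, smul_eq_mul, hω.apply_self_of_contract_eq hY,
    hω.apply_of_contract_eq hY hXf, hω.apply_of_contract_eq hY hXφ]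
  linear_combination ha

theorem df_apply_combination (hω : ω.IsAlt) (hXf : ∀ w, ω Xf w = df w)
    (hb : b * (f - df Y) = df Xφ) (a : K) :
    df (a • Xf + b • Y + Xφ) = f * b := by
  simp only [map_add, map_smul, smul_eq_mul, hω.apply_self_of_contract_eq hXf]
  linear_combination -hb

theorem dphi_apply_combination (hω : ω.IsAlt) (hXf : ∀ w, ω Xf w = df w)
    (hXφ : ∀ w, ω Xφ w = dφ w) (ha : a * (f - df Y) = φ + dφ Y)
    (hb : b * (f - df Y) = df Xφ) :
    dφ (a • Xf + b • Y + Xφ) = -(φ * b) := by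
  simp only [map_add, map_smul, smul_eq_mul, hω.apply_self_of_contract_eq hXφ,
    hω.apply_of_contract_eq hXφ hXf]
  linear_combination a * hb - b * ha

theorem omega_apply_combination (hY : ∀ w, ω Y w = β w)
    (hXf : ∀ w, ω Xf w = df w) (hXφ : ∀ w, ω Xφ w = dφ w) (a b : K) (w : F) :
    ω (a • Xf + b • Y + Xφ) w = a * df w + b * β w + dφ w := by
  simp only [map_add, map_smul, LinearMap.add_apply, LinearMap.smul_apply, smul_eq_mul, hY,
    hXf, hXφ]

end ReebCombination

/-- Pointwise (linear-algebra) form of the Reeb vector field computation for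
`λ = φ (f ds + β)` on `S¹ × W`, where `(W, β)` is a Liouville manifold with
`ω = dβ`, `Y` the Liouville field (`ι_Y ω = β`), `X_f, X_φ` the
`ω`-Hamiltonian-type fields of `f, φ` (`ι_{X_f} ω = df`, `ι_{X_φ} ω = dφ`),
and `f - df(Y) > 0`, `φ > 0`.  Then
`R = (1/φ²) ( ((φ + dφ(Y))/(f - df(Y))) (∂_s + X_f)
      + (df(X_φ)/(f - df(Y))) Y + X_φ )`
satisfies `λ(R) = 1` and `ι_R dλ = 0`, where
`dλ = (φ df + f dφ) ∧ ds + dφ ∧ β + φ ω`. -/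
theorem stmt_15 (F : Type*) [AddCommGroup F] [Module ℝ F]
    (ω : F →ₗ[ℝ] F →ₗ[ℝ] ℝ) (halt : ∀ v, ω v v = 0)
    (β df dφ : F →ₗ[ℝ] ℝ) (Y Xf Xφ : F)
    (hY : ∀ w, ω Y w = β w) (hXf : ∀ w, ω Xf w = df w)
    (hXφ : ∀ w, ω Xφ w = dφ w)
    (f φ : ℝ) (hf : 0 < f - df Y) (hφ : 0 < φ)
    (lam : ℝ × F → ℝ) (hlam : ∀ v, lam v = φ * (f * v.1 + β v.2))
    (dlam : ℝ × F → ℝ × F → ℝ)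
    (hdlam : ∀ v w, dlam v w =
      ((φ * df v.2 + f * dφ v.2) * w.1 - (φ * df w.2 + f * dφ w.2) * v.1)
        + (dφ v.2 * β w.2 - dφ w.2 * β v.2) + φ * ω v.2 w.2)
    (R : ℝ × F)
    (hR : R = ((1/φ^2) * ((φ + dφ Y) / (f - df Y)),
      (φ^2)⁻¹ • (((φ + dφ Y) / (f - df Y)) • Xf
        + (df Xφ / (f - df Y)) • Y + Xφ))) :
    lam R = 1 ∧ ∀ w : ℝ × F, dlam R w = 0 := by
  have hω : ω.IsAlt := halt
  have ha : (φ + dφ Y) / (f - df Y) * (f - df Y) = φ + dφ Y := div_mul_cancel₀ _ hf.ne'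
  have hb : df Xφ / (f - df Y) * (f - df Y) = df Xφ := div_mul_cancel₀ _ hf.ne'
  generalize (φ + dφ Y) / (f - df Y) = a at ha hR
  generalize df Xφ / (f - df Y) = b at hb hR
  subst hR
  constructor
  · rw [hlam]
    simp only [map_smul, smul_eq_mul, beta_apply_combination hω hY hXf hXφ ha]
    field_simp
    ring
  · intro w
    rw [hdlam]
    simp only [map_smul, LinearMap.smul_apply, smul_eq_mul,
      beta_apply_combination hω hY hXf hXφ ha, df_apply_combination hω hXf hb,
      dphi_apply_combination hω hXf hXφ ha hb, omega_apply_combination hY hXf hXφ]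
    ring
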